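/- Let C be an [n,k;n_1,…,n_ℓ] sum-rank metric code over (F;K_1,…,K_ℓ). Then the dual of the sum-matroid associated to C equals the sum-matroid associated to the dual code C⊥; that is, for every L ∈ P(K^n), ρ_{C⊥}(L) = ρ_C(L⊥) + Rk(L) − ρ_C(K^n). -/

import Mathlib

open Module

/-! Setup for sum-rank metric codes and sum-matroids.

We fix `ℓ` finite fields `K i` with a common extension `F` (given by algebra
structures), and block lengths `nv i`.  The ambient space `F^n` (with
`n = ∑ i, nv i`) is modelled as the dependent product of the blocks `F^{nv i}`,
and an element of the product lattice `P(K^n)` is a tuple of `K i`-subspaces of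
`K i ^ (nv i)`. -/

/-- The ambient space `F^n`, split into `ℓ` blocks of sizes `nv i`. -/
abbrev SRAmb (ℓ : ℕ) (nv : Fin ℓ → ℕ) (F : Type) : Type :=
  (i : Fin ℓ) → Fin (nv i) → F

/-- The product lattice `P(K^n)`: tuples `L` where `L i` is a `K i`-subspace of
`K i ^ (nv i)`. -/
abbrev SRLat (ℓ : ℕ) (nv : Fin ℓ → ℕ) (K : Fin ℓ → Type) [∀ i, Field (K i)] : Type :=
  (i : Fin ℓ) → Submodule (K i) (Fin (nv i) → K i)

variable {ℓ : ℕ} {nv : Fin ℓ → ℕ} {F : Type} [Field F]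
  {K : Fin ℓ → Type} [∀ i, Field (K i)] [∀ i, Algebra (K i) F]

/-- `Rk(L) = ∑ i, dim_{K i} (L i)`. -/
noncomputable def SRrk (L : SRLat ℓ nv K) : ℕ := ∑ i, finrank (K i) (L i)

/-- Orthogonal complement of a subspace of `k^m` with respect to the standard
dot product. -/
def SRorth {k : Type} [Field k] {m : ℕ} (W : Submodule k (Fin m → k)) :
    Submodule k (Fin m → k) where
  carrier := {v | ∀ w ∈ W, ∑ t, v t * w t = 0}
  zero_mem' := by intro w hw; simp
  add_mem' := by
    intro a b ha hb w hw
    have h : ∑ t, (a + b) t * w t = (∑ t, a t * w t) + ∑ t, b t * w t := by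
      simp [add_mul, Finset.sum_add_distrib]
    rw [h, ha w hw, hb w hw, add_zero]
  smul_mem' := by
    intro c a ha w hw
    have h : ∑ t, (c • a) t * w t = c * ∑ t, a t * w t := by
      simp [Finset.mul_sum, mul_assoc]
    rw [h, ha w hw, mul_zero]

/-- Componentwise orthogonal complement `L^⊥` in the lattice `P(K^n)`. -/
def SRlatPerp (L : SRLat ℓ nv K) : SRLat ℓ nv K := fun i => SRorth (L i)

/-- The `i`-th component of the sum-rank support of `c ∈ F^n`: the `K i`-row
space of the coordinate matrix of the `i`-th block of `c` (described
basis-freely as the span of the images of the block of `c` under all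
`K i`-linear functionals `F → K i`). -/
def SRsupp (c : SRAmb ℓ nv F) (i : Fin ℓ) : Submodule (K i) (Fin (nv i) → K i) :=
  Submodule.span (K i) {v | ∃ f : F →ₗ[K i] K i, v = fun t => f (c i t)}

/-- The sum-rank weight `srank(c) = Rk(supp(c))`. -/
noncomputable def SRwt (c : SRAmb ℓ nv F) : ℕ :=
  ∑ i, finrank (K i) (SRsupp (K := K) c i)

/-- The sum-rank support space `V_L = {c ∈ F^n : supp(c) ⊆ L}`. -/
def SRVL (L : SRLat ℓ nv K) : Submodule F (SRAmb ℓ nv F) where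
  carrier := {c | ∀ i, SRsupp (K := K) c i ≤ L i}
  zero_mem' := by
    intro i
    apply Submodule.span_le.mpr
    rintro v ⟨f, rfl⟩
    have h : (fun t => f ((0 : SRAmb ℓ nv F) i t)) = (0 : Fin (nv i) → K i) := by
      funext t; simp
    rw [h]
    exact (L i).zero_mem
  add_mem' := by
    intro a b ha hb i
    apply Submodule.span_le.mpr
    rintro v ⟨f, rfl⟩
    have h : (fun t => f ((a + b) i t)) =
        (fun t => f (a i t)) + fun t => f (b i t) := by
      funext t; simp
    rw [h]
    exact (L i).add_mem (ha i (Submodule.subset_span ⟨f, rfl⟩))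
      (hb i (Submodule.subset_span ⟨f, rfl⟩))
  smul_mem' := by
    intro x a ha i
    apply Submodule.span_le.mpr
    rintro v ⟨f, rfl⟩
    have h : (fun t => f ((x • a) i t)) =
        fun t => (f.comp (LinearMap.mulLeft (K i) x)) (a i t) := by
      funext t; simp [smul_eq_mul]
    rw [h]
    exact ha i (Submodule.subset_span ⟨_, rfl⟩)

/-- The dual code `C^⊥` with respect to the standard bilinear form on `F^n`. -/
def SRdual (C : Submodule F (SRAmb ℓ nv F)) : Submodule F (SRAmb ℓ nv F) where
  carrier := {x | ∀ c ∈ C, ∑ i, ∑ t, x i t * c i t = 0}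
  zero_mem' := by intro c hc; simp
  add_mem' := by
    intro a b ha hb c hc
    have h : ∑ i, ∑ t, (a + b) i t * c i t =
        (∑ i, ∑ t, a i t * c i t) + ∑ i, ∑ t, b i t * c i t := by
      simp [add_mul, Finset.sum_add_distrib]
    rw [h, ha c hc, hb c hc, add_zero]
  smul_mem' := by
    intro x a ha c hc
    have h : ∑ i, ∑ t, (x • a) i t * c i t = x * ∑ i, ∑ t, a i t * c i t := by
      simp [Finset.mul_sum, mul_assoc]
    rw [h, ha c hc, mul_zero]

/-- `C(L) = {c ∈ C^⊥ : supp(c) ⊆ L^⊥} = C^⊥ ∩ V_{L^⊥}`. -/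
def SRCL (C : Submodule F (SRAmb ℓ nv F)) (L : SRLat ℓ nv K) :
    Submodule F (SRAmb ℓ nv F) :=
  SRdual C ⊓ SRVL (SRlatPerp L)

/-- The projection `Π_L : F^n → F^{Rk L}`, `x ↦ x Aᵀ`, where
`A = diag(A_1, …, A_ℓ)` and `A_i` is the matrix whose rows are the chosen basis
of `L i` over `K i`.  The target `F^{Rk L}` is indexed blockwise. -/
noncomputable def SRpi (L : SRLat ℓ nv K) :
    SRAmb ℓ nv F →ₗ[F] ((i : Fin ℓ) → Fin (finrank (K i) (L i)) → F) where
  toFun x := fun i j =>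
    ∑ t, x i t * algebraMap (K i) F ((Module.finBasis (K i) (L i) j).val t)
  map_add' x y := by
    funext i j
    simp [add_mul, Finset.sum_add_distrib]
  map_smul' a x := by
    funext i j
    simp [Finset.mul_sum, mul_assoc]

/-- The rank function `ρ_C(L) = dim_F Π_L(C^⊥)` of the sum-matroid associated
to the code `C`. -/
noncomputable def SRrho (C : Submodule F (SRAmb ℓ nv F)) (L : SRLat ℓ nv K) : ℕ :=
  finrank F (Submodule.map (SRpi (F := F) L) (SRdual C))

/-- Minimum sum-rank distance of a code. -/
noncomputable def SRminDist (K : Fin ℓ → Type) [∀ i, Field (K i)]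
    [∀ i, Algebra (K i) F] (C : Submodule F (SRAmb ℓ nv F)) : ℕ :=
  sInf {w | ∃ c ∈ C, c ≠ 0 ∧ SRwt (K := K) c = w}

/-- The `r`-th generalized sum-rank weight
`d_{SR,r}(C) = min{Rk L : dim_F (C ∩ V_L) ≥ r}`. -/
noncomputable def SRdgw (K : Fin ℓ → Type) [∀ i, Field (K i)]
    [∀ i, Algebra (K i) F] (C : Submodule F (SRAmb ℓ nv F)) (r : ℕ) : ℕ :=
  sInf {w | ∃ L : SRLat ℓ nv K, r ≤ finrank F ↥(C ⊓ SRVL L) ∧ SRrk L = w}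

/-- The sum-matroid axioms (R1), (R2), (R3) for a function `ρ : P(K^n) → ℕ`. -/
def IsSumMatroid (ρ : SRLat ℓ nv K → ℕ) : Prop :=
  (∀ L, ρ L ≤ SRrk L) ∧
  (∀ L L' : SRLat ℓ nv K, L ≤ L' → ρ L ≤ ρ L') ∧
  (∀ L L' : SRLat ℓ nv K, ρ (L ⊔ L') + ρ (L ⊓ L') ≤ ρ L + ρ L')

/-- The dual rank function `ρ*(L) = ρ(L^⊥) + Rk L − ρ(K^n)`. -/
noncomputable def SRdualRk (ρ : SRLat ℓ nv K → ℕ) (L : SRLat ℓ nv K) : ℕ :=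
  ρ (SRlatPerp L) + SRrk L - ρ ⊤

/-- The nullity function `η(L) = Rk L − ρ(L)`. -/
noncomputable def SReta (ρ : SRLat ℓ nv K → ℕ) (L : SRLat ℓ nv K) : ℕ :=
  SRrk L - ρ L

/-- The `i`-th generalized weight of a sum-matroid,
`d_i(M) = min{Rk L : η(L) = i}`. -/
noncomputable def SRgw (ρ : SRLat ℓ nv K → ℕ) (i : ℕ) : ℕ :=
  sInf {w | ∃ L : SRLat ℓ nv K, SReta ρ L = i ∧ SRrk L = w}

/-! Write `Π_L x = x Aᵀ` and let `Ψ_L y = y A` be its adjoint for the standard dot products;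
`Ψ_L` is injective because a `K_i`-basis of `L_i` stays linearly independent over `F`.
Adjointness turns `Π_L(C)^⊥` into `Ψ_L⁻¹(C^⊥)`, so `ρ_{C^⊥}(L) = Rk L - dim (C^⊥ ∩ im Ψ_L)`.
Since `L^⊥` is orthogonal to `L` and the dimensions match, `ker Π_{L^⊥} = im Ψ_L`, so rank–nullity
gives `ρ_C(L^⊥) = dim C^⊥ - dim (C^⊥ ∩ im Ψ_L)`. Finally `Π_{K^n}` is injective, so
`ρ_C(K^n) = dim C^⊥`. -/

namespace LinearMap

variable {𝕜 V W : Type*} [Field 𝕜] [AddCommGroup V] [Module 𝕜 V] [AddCommGroup W] [Module 𝕜 W]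

theorem finrank_map_add_finrank_inf_ker [FiniteDimensional 𝕜 V] (f : V →ₗ[𝕜] W)
    (D : Submodule 𝕜 V) :
    finrank 𝕜 (D.map f) + finrank 𝕜 (D ⊓ ker f : Submodule 𝕜 V) = finrank 𝕜 D := by
  have h := finrank_range_add_finrank_ker (f.domRestrict D)
  rwa [range_domRestrict, ker_domRestrict,
    ← Submodule.finrank_map_subtype_eq D, Submodule.map_comap_subtype] at h

variable {B : LinearMap.BilinForm 𝕜 V} {B' : LinearMap.BilinForm 𝕜 W}
  {f : V →ₗ[𝕜] W} {g : W →ₗ[𝕜] V}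

theorem IsAdjointPair.orthogonal_map (h : IsAdjointPair B B' f g) (D : Submodule 𝕜 V) :
    B'.orthogonal (D.map f) = (B.orthogonal D).comap g := by
  ext y
  simp [BilinForm.mem_orthogonal_iff, h _ y]

theorem IsAdjointPair.ker_eq_orthogonal_range (h : IsAdjointPair B B' f g) (hB : IsRefl B)
    (hB' : B'.SeparatingLeft) : ker f = B.orthogonal (range g) := by
  ext x
  simp only [mem_ker, BilinForm.mem_orthogonal_iff, mem_range, forall_exists_index,
    forall_apply_eq_imp_iff]
  refine ⟨fun hx y => hB _ _ ?_, fun hx => hB' _ fun y => ?_⟩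
  · rw [← h, hx, map_zero, zero_apply]
  · rw [h]; exact hB _ _ (hx y)

theorem IsAdjointPair.finrank_map_orthogonal_add [FiniteDimensional 𝕜 V] [FiniteDimensional 𝕜 W]
    (h : IsAdjointPair B B' f g) (hB : B.Nondegenerate) (hB₀ : IsRefl B)
    (hB' : B'.Nondegenerate) (hg : Function.Injective g) (D : Submodule 𝕜 V) :
    finrank 𝕜 ((B.orthogonal D).map f) + finrank 𝕜 (D ⊓ range g : Submodule 𝕜 V) =
      finrank 𝕜 W := by
  have horth := BilinForm.finrank_orthogonal hB' ((B.orthogonal D).map f)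
  rw [h.orthogonal_map, BilinForm.orthogonal_orthogonal hB hB₀,
    (Submodule.equivMapOfInjective g hg _).finrank_eq, Submodule.map_comap_eq, inf_comm] at horth
  have := Submodule.finrank_le ((B.orthogonal D).map f)
  omega

end LinearMap

section BlockDot

variable {ι : Type*} [Fintype ι] {κ : ι → Type*} [∀ i, Fintype (κ i)] {R : Type*} [CommRing R]

def blockDot : LinearMap.BilinForm R ((i : ι) → κ i → R) :=
  ∑ i, (dotProductBilin R R).compl₁₂ (LinearMap.proj i) (LinearMap.proj i)

theorem blockDot_apply (x y : (i : ι) → κ i → R) : blockDot x y = ∑ i, x i ⬝ᵥ y i := by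
  simp [blockDot]

theorem blockDot_isRefl :
    LinearMap.IsRefl (blockDot : LinearMap.BilinForm R ((i : ι) → κ i → R)) := by
  intro x y h
  simpa [blockDot_apply, dotProduct_comm] using h

theorem blockDot_nondegenerate :
    (blockDot : LinearMap.BilinForm R ((i : ι) → κ i → R)).Nondegenerate := by
  classical
  refine blockDot_isRefl.nondegenerate_iff_separatingLeft.mpr fun x hx => ?_
  funext i
  refine dotProduct_eq_zero_iff.mp fun w => ?_
  have := hx (Pi.single i w)
  rwa [blockDot_apply, Finset.sum_eq_single i (fun j _ hj => by simp [Pi.single_eq_of_ne hj])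
    (by simp), Pi.single_eq_same] at this

end BlockDot

section DotProduct

variable {R : Type*} [CommRing R] {m : Type*} [Fintype m]

theorem dotProductBilin_isRefl :
    LinearMap.IsRefl (dotProductBilin R R : LinearMap.BilinForm R (m → R)) :=
  fun x y h => by simpa [dotProduct_comm] using h

theorem dotProductBilin_nondegenerate :
    (dotProductBilin R R : LinearMap.BilinForm R (m → R)).Nondegenerate :=
  dotProductBilin_isRefl.nondegenerate_iff_separatingLeft.mpr fun _ hx =>
    dotProduct_eq_zero_iff.mp hx

end DotProduct

open Matrix

theorem SRdual_eq_orthogonal {m : Fin ℓ → ℕ} (C : Submodule F (SRAmb ℓ m F)) :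
    SRdual C = blockDot.orthogonal C := by
  ext x
  change (∀ c ∈ C, _) ↔ _
  simp only [LinearMap.BilinForm.mem_orthogonal_iff, blockDot_apply, dotProduct, mul_comm]

theorem SRorth_eq_orthogonal {k : Type} [Field k] {m : ℕ} (W : Submodule k (Fin m → k)) :
    SRorth W = LinearMap.BilinForm.orthogonal (dotProductBilin k k) W := by
  ext v
  change (∀ w ∈ W, _) ↔ _
  simp only [LinearMap.BilinForm.mem_orthogonal_iff, dotProductBilin_apply_apply, dotProduct,
    mul_comm]

theorem finrank_SRorth_add {k : Type} [Field k] {m : ℕ} (W : Submodule k (Fin m → k)) :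
    finrank k (SRorth W) + finrank k W = m := by
  rw [SRorth_eq_orthogonal, LinearMap.BilinForm.finrank_orthogonal dotProductBilin_nondegenerate,
    finrank_fin_fun]
  have := (Submodule.finrank_le W).trans_eq (finrank_fin_fun k)
  omega

theorem finrank_SRAmb (m : Fin ℓ → ℕ) : finrank F (SRAmb ℓ m F) = ∑ i, m i := by
  simp [Module.finrank_pi_fintype]

theorem SRrk_SRlatPerp_add (L : SRLat ℓ nv K) : SRrk (SRlatPerp L) + SRrk L = ∑ i, nv i := by
  simp only [SRrk, ← Finset.sum_add_distrib]
  exact Finset.sum_congr rfl fun i _ => finrank_SRorth_add (L i)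

theorem SRrk_top : SRrk (⊤ : SRLat ℓ nv K) = ∑ i, nv i := by
  simp [SRrk]

/-- The matrix `A_i` of the paper, before extending scalars to `F`. -/
noncomputable def SRbasisMatrix (L : SRLat ℓ nv K) (i : Fin ℓ) :
    Matrix (Fin (finrank (K i) (L i))) (Fin (nv i)) (K i) :=
  Matrix.of fun j => Module.finBasis (K i) (L i) j

theorem SRpi_apply (L : SRLat ℓ nv K) (x : SRAmb ℓ nv F) (i : Fin ℓ) :
    SRpi L x i = x i ᵥ* ((SRbasisMatrix L i).map (algebraMap (K i) F))ᵀ := by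
  ext j
  simp [SRpi, SRbasisMatrix, vecMul, dotProduct]

noncomputable def SRpsi (L : SRLat ℓ nv K) :
    SRAmb ℓ (fun i => finrank (K i) (L i)) F →ₗ[F] SRAmb ℓ nv F :=
  LinearMap.pi fun i =>
    ((SRbasisMatrix L i).map (algebraMap (K i) F)).vecMulLinear ∘ₗ LinearMap.proj i

theorem SRpsi_apply (L : SRLat ℓ nv K) (y : SRAmb ℓ (fun i => finrank (K i) (L i)) F)
    (i : Fin ℓ) : SRpsi L y i = y i ᵥ* (SRbasisMatrix L i).map (algebraMap (K i) F) :=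
  rfl

theorem isAdjointPair_SRpi_SRpsi (L : SRLat ℓ nv K) :
    LinearMap.IsAdjointPair blockDot blockDot (SRpi (F := F) L) (SRpsi L) := by
  intro x y
  simp only [blockDot_apply, SRpi_apply, SRpsi_apply, ← dotProduct_mulVec, mulVec_transpose]

theorem SRpsi_injective (L : SRLat ℓ nv K) : Function.Injective (SRpsi (F := F) L) := by
  intro y y' h
  funext i
  have hbasis := (Module.finBasis (K i) (L i)).linearIndependent.map' _ (Submodule.ker_subtype _)
  have hrows : LinearIndependent F ((SRbasisMatrix L i).map (algebraMap (K i) F)).row :=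
    linearIndependent_algebraMap_comp_iff.mpr hbasis
  have hi := congrFun h i
  rw [SRpsi_apply, SRpsi_apply] at hi
  exact Matrix.vecMul_injective_iff.mpr hrows hi

theorem SRbasisMatrix_mul_transpose_SRlatPerp (L : SRLat ℓ nv K) (i : Fin ℓ) :
    SRbasisMatrix L i * (SRbasisMatrix (SRlatPerp L) i)ᵀ = 0 := by
  ext j j'
  have horth := (Module.finBasis (K i) (SRlatPerp L i) j').2 _ (Module.finBasis (K i) (L i) j).2
  simpa [SRbasisMatrix, mul_apply, mul_comm] using horth

theorem SRpi_SRlatPerp_comp_SRpsi (L : SRLat ℓ nv K) :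
    SRpi (F := F) (SRlatPerp L) ∘ₗ SRpsi L = 0 := by
  refine LinearMap.ext fun y => funext fun i => ?_
  rw [LinearMap.comp_apply, SRpi_apply, SRpsi_apply, vecMul_vecMul, ← transpose_map,
    ← Matrix.map_mul, SRbasisMatrix_mul_transpose_SRlatPerp, Matrix.map_zero _ (map_zero _),
    vecMul_zero]
  rfl

theorem ker_SRpi_eq_orthogonal (L : SRLat ℓ nv K) :
    LinearMap.ker (SRpi (F := F) L) = blockDot.orthogonal (LinearMap.range (SRpsi L)) :=
  (isAdjointPair_SRpi_SRpsi L).ker_eq_orthogonal_range blockDot_isRefl blockDot_nondegenerate.1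

theorem ker_SRpi_SRlatPerp (L : SRLat ℓ nv K) :
    LinearMap.ker (SRpi (F := F) (SRlatPerp L)) = LinearMap.range (SRpsi L) := by
  refine (Submodule.eq_of_le_of_finrank_le
    (LinearMap.range_le_ker_iff.mpr (SRpi_SRlatPerp_comp_SRpsi L)) ?_).symm
  rw [ker_SRpi_eq_orthogonal, LinearMap.BilinForm.finrank_orthogonal blockDot_nondegenerate,
    LinearMap.finrank_range_of_inj (SRpsi_injective _),
    LinearMap.finrank_range_of_inj (SRpsi_injective _), finrank_SRAmb, finrank_SRAmb,
    finrank_SRAmb]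
  have := SRrk_SRlatPerp_add L
  unfold SRrk at this
  omega

theorem ker_SRpi_top : LinearMap.ker (SRpi (F := F) (⊤ : SRLat ℓ nv K)) = ⊥ := by
  have hrange : LinearMap.range (SRpsi (F := F) (⊤ : SRLat ℓ nv K)) = ⊤ := by
    refine Submodule.eq_top_of_finrank_eq ?_
    rw [LinearMap.finrank_range_of_inj (SRpsi_injective _), finrank_SRAmb, finrank_SRAmb]
    exact SRrk_top
  rw [ker_SRpi_eq_orthogonal, hrange, LinearMap.BilinForm.orthogonal_top_eq_bot
    blockDot_nondegenerate]

theorem SRrho_top (C : Submodule F (SRAmb ℓ nv F)) :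
    SRrho C (⊤ : SRLat ℓ nv K) = finrank F (SRdual C) := by
  have h := LinearMap.finrank_map_add_finrank_inf_ker (SRpi (⊤ : SRLat ℓ nv K)) (SRdual C)
  rwa [ker_SRpi_top, inf_bot_eq, finrank_bot, add_zero] at h

theorem SRrho_SRlatPerp_add (C : Submodule F (SRAmb ℓ nv F)) (L : SRLat ℓ nv K) :
    SRrho C (SRlatPerp L) +
        finrank F (SRdual C ⊓ LinearMap.range (SRpsi (F := F) L) : Submodule F _) =
      finrank F (SRdual C) := by
  rw [← ker_SRpi_SRlatPerp]
  exact LinearMap.finrank_map_add_finrank_inf_ker _ _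

theorem SRrho_SRdual_add (C : Submodule F (SRAmb ℓ nv F)) (L : SRLat ℓ nv K) :
    SRrho (SRdual C) L +
        finrank F (SRdual C ⊓ LinearMap.range (SRpsi (F := F) L) : Submodule F _) =
      SRrk L := by
  rw [SRrho, SRdual_eq_orthogonal (SRdual C)]
  exact ((isAdjointPair_SRpi_SRpsi L).finrank_map_orthogonal_add blockDot_nondegenerate
    blockDot_isRefl blockDot_nondegenerate (SRpsi_injective L) _).trans (finrank_SRAmb _)

theorem stmt8_dual_matroid_eq_matroid_of_dual_general
    {ℓ : ℕ} {nv : Fin ℓ → ℕ} {F : Type} [Field F] {K : Fin ℓ → Type} [∀ i, Field (K i)]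
    [∀ i, Algebra (K i) F] (C : Submodule F (SRAmb ℓ nv F)) (L : SRLat ℓ nv K) :
    SRrho (SRdual C) L = SRrho C (SRlatPerp L) + SRrk L - SRrho C (⊤ : SRLat ℓ nv K) := by
  have hdual := SRrho_SRdual_add C L
  have hperp := SRrho_SRlatPerp_add C L
  rw [SRrho_top]
  omega

/-- The dual of the sum-matroid associated to `C` is the
sum-matroid associated to `C^⊥`: for every `L ∈ P(K^n)`,
`ρ_{C^⊥}(L) = ρ_C(L^⊥) + Rk(L) − ρ_C(K^n)`. -/
theorem stmt8_dual_matroid_eq_matroid_of_dual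
    {ℓ : ℕ} (hℓ : 0 < ℓ) {nv : Fin ℓ → ℕ} (hnv : ∀ i, 0 < nv i)
    {F : Type} [Field F] [Finite F]
    {K : Fin ℓ → Type} [∀ i, Field (K i)] [∀ i, Finite (K i)]
    [∀ i, Algebra (K i) F] [∀ i, FiniteDimensional (K i) F]
    (C : Submodule F (SRAmb ℓ nv F)) (k : ℕ) (hk : Module.finrank F C = k)
    (L : SRLat ℓ nv K) :
    SRrho (SRdual C) L = SRrho C (SRlatPerp L) + SRrk L - SRrho C (⊤ : SRLat ℓ nv K) :=
  stmt8_dual_matroid_eq_matroid_of_dual_general C L
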